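/- Let a₁ ∈ ℝ∖{0} and a₂,a₃ ∈ ℂ∖{0} with a₂·a₃ ∈ ℝ, and let Q := Q_{a₁,a₂,a₃}. Let Q̄ denote the polynomial with complex-conjugated coefficients (so Q̄ = Q_{a₁,conj(a₂),conj(a₃)}). Then Q̄(−z, i·y, x) = Q(x,y,z) as polynomials; consequently the projective transformation μ(x:y:z) = (−z : i·y : x) maps the zero locus of Q in ℙ²(ℂ) bijectively onto the zero locus of Q̄. -/

import Mathlib

/-!
The substitution `(x, y, z) ↦ (-z, iy, x)` carries each pair of linear factors
`(x - b z)(x + a⁻¹ z)` of `Q̄` to `-(b / a)` times the pair `(x - a z)(x + b⁻¹ z)` of `Q`.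
For the `a₁`-pair this scalar is `-1`, which is cancelled by `(iy)² = -y²`; for the `a₂`- and
`a₃`-pairs the scalars multiply to `ā₂ā₃ / (a₂a₃) = 1` because `a₂a₃` is real. Since `Q` and `Q̄`
are homogeneous and `μ` is invertible, the polynomial identity turns into a bijection of zero loci.
-/

open MvPolynomial Matrix Complex

noncomputable section

/-- The quartic polynomial F_{a,b,c}. -/
def quarticF (a b c : ℂ) : MvPolynomial (Fin 3) ℂ :=
  X 0 ^ 4 + X 1 ^ 4 + X 2 ^ 4 + C a * X 0 ^ 2 * X 1 ^ 2 +
    C b * X 0 ^ 2 * X 2 ^ 2 + C c * X 1 ^ 2 * X 2 ^ 2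

/-- Smoothness of a plane curve. -/
def IsSmoothPlaneCurve (P : MvPolynomial (Fin 3) ℂ) : Prop :=
  ¬ ∃ v : Fin 3 → ℂ, v ≠ 0 ∧ eval v P = 0 ∧ ∀ i : Fin 3, eval v (pderiv i P) = 0

/-- The zero locus in ℙ²(ℂ). -/
def zeroLocus (P : MvPolynomial (Fin 3) ℂ) : Set (Projectivization ℂ (Fin 3 → ℂ)) :=
  {p | eval p.rep P = 0}

/-- The projective action of an invertible matrix on ℙ²(ℂ). -/
def projAction (A : GL (Fin 3) ℂ) (p : Projectivization ℂ (Fin 3 → ℂ)) :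
    Projectivization ℂ (Fin 3 → ℂ) :=
  Projectivization.mk ℂ ((A : Matrix (Fin 3) (Fin 3) ℂ) *ᵥ p.rep) (by
    intro h
    apply p.rep_nonzero
    have h2 := congrArg (fun w => ((A⁻¹ : GL (Fin 3) ℂ) : Matrix (Fin 3) (Fin 3) ℂ) *ᵥ w) h
    simp only [Matrix.mulVec_mulVec] at h2
    have h3 : ((A⁻¹ : GL (Fin 3) ℂ) : Matrix (Fin 3) (Fin 3) ℂ) *
        ((A : GL (Fin 3) ℂ) : Matrix (Fin 3) (Fin 3) ℂ) = 1 := by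
      exact_mod_cast A.inv_mul
    rw [h3] at h2
    simpa using h2)

/-- `A` maps `S` bijectively onto `T` via its projective action. -/
def MapsOnto (A : GL (Fin 3) ℂ)
    (S T : Set (Projectivization ℂ (Fin 3 → ℂ))) : Prop :=
  Set.BijOn (projAction A) S T

/-- The quartic `Q_{a₁,a₂,a₃}` (with `a₁` real). -/
def quarticQ (a₁ : ℝ) (a₂ a₃ : ℂ) : MvPolynomial (Fin 3) ℂ :=
  X 1 ^ 4 +
    X 1 ^ 2 * ((X 0 - C (a₁ : ℂ) * X 2) * (X 0 + C ((a₁ : ℂ))⁻¹ * X 2)) +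
    (X 0 - C a₂ * X 2) * (X 0 + C (((starRingEnd ℂ) a₂))⁻¹ * X 2) *
      (X 0 - C a₃ * X 2) * (X 0 + C (((starRingEnd ℂ) a₃))⁻¹ * X 2)

/-- The projective transformation `μ(x:y:z) = (−z : iy : x)` as an element of `GL₃(ℂ)`. -/
def muGL : GL (Fin 3) ℂ :=
  ⟨!![0, 0, -1; 0, Complex.I, 0; 1, 0, 0], !![0, 0, 1; 0, -Complex.I, 0; -1, 0, 0],
    by
      ext i j
      fin_cases i <;> fin_cases j <;>
        simp [Matrix.mul_apply, Fin.sum_univ_succ, Matrix.one_apply, Complex.I_mul_I],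
    by
      ext i j
      fin_cases i <;> fin_cases j <;>
        simp [Matrix.mul_apply, Fin.sum_univ_succ, Matrix.one_apply, Complex.I_mul_I]⟩


lemma MvPolynomial.IsHomogeneous.eval_smul {σ R : Type*} [CommSemiring R]
    {φ : MvPolynomial σ R} {n : ℕ} (hφ : φ.IsHomogeneous n) (c : R) (v : σ → R) :
    eval (c • v) φ = c ^ n * eval v φ := by
  rw [eval_eq, eval_eq, Finset.mul_sum]
  refine Finset.sum_congr rfl fun d hd => ?_
  simp only [Pi.smul_apply, smul_eq_mul, mul_pow, Finset.prod_mul_distrib,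
    Finset.prod_pow_eq_pow_sum, ← hφ.degree_eq_sum_deg_support hd]
  ring

lemma mk_mem_zeroLocus_iff {P : MvPolynomial (Fin 3) ℂ} {n : ℕ} (hP : P.IsHomogeneous n)
    (v : Fin 3 → ℂ) (hv : v ≠ 0) :
    Projectivization.mk ℂ v hv ∈ zeroLocus P ↔ eval v P = 0 := by
  obtain ⟨c, hc⟩ := Projectivization.exists_smul_eq_mk_rep ℂ v hv
  change eval (Projectivization.mk ℂ v hv).rep P = 0 ↔ _
  rw [← hc, Units.smul_def, hP.eval_smul]
  simp [c.ne_zero]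

lemma Matrix.GeneralLinearGroup.mulVec_ne_zero {n K : Type*} [Fintype n] [DecidableEq n]
    [CommRing K] (A : GL n K) {v : n → K} (hv : v ≠ 0) : (A : Matrix n n K) *ᵥ v ≠ 0 := by
  simpa using (Matrix.mulVec_injective_of_isUnit A.isUnit).ne hv

lemma projAction_mk (A : GL (Fin 3) ℂ) (v : Fin 3 → ℂ) (hv : v ≠ 0) :
    projAction A (Projectivization.mk ℂ v hv) =
      Projectivization.mk ℂ ((A : Matrix (Fin 3) (Fin 3) ℂ) *ᵥ v)
        (Matrix.GeneralLinearGroup.mulVec_ne_zero A hv) := by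
  obtain ⟨c, hc⟩ := Projectivization.exists_smul_eq_mk_rep ℂ v hv
  refine (Projectivization.mk_eq_mk_iff ..).mpr ⟨c, ?_⟩
  rw [← hc, Units.smul_def, Units.smul_def, Matrix.mulVec_smul]

lemma projAction_inv_projAction (A : GL (Fin 3) ℂ) (p : Projectivization ℂ (Fin 3 → ℂ)) :
    projAction A⁻¹ (projAction A p) = p := by
  induction p using Projectivization.ind with
  | h v hv =>
    rw [projAction_mk, projAction_mk, Projectivization.mk_eq_mk_iff]
    refine ⟨1, ?_⟩
    rw [one_smul, Matrix.mulVec_mulVec, Units.inv_mul, Matrix.one_mulVec]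

lemma projAction_bijective (A : GL (Fin 3) ℂ) : Function.Bijective (projAction A) :=
  ⟨Function.LeftInverse.injective (projAction_inv_projAction A),
    Function.RightInverse.surjective fun p => by
      simpa using projAction_inv_projAction A⁻¹ p⟩

lemma mapsOnto_of_forall_mem_iff {A : GL (Fin 3) ℂ} {S T : Set (Projectivization ℂ (Fin 3 → ℂ))}
    (h : ∀ p, p ∈ S ↔ projAction A p ∈ T) : MapsOnto A S T := by
  obtain rfl : S = projAction A ⁻¹' T := Set.ext h
  exact (projAction_bijective A).bijOn_preimage

lemma muGL_mulVec (v : Fin 3 → ℂ) :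
    (muGL : Matrix (Fin 3) (Fin 3) ℂ) *ᵥ v = ![-(v 2), I * v 1, v 0] := by
  funext i
  fin_cases i <;> simp [muGL, Matrix.mulVec, dotProduct, Fin.sum_univ_three]

lemma eval_bind₁_eq_eval_muGL_mulVec (P : MvPolynomial (Fin 3) ℂ) (v : Fin 3 → ℂ) :
    eval v (bind₁ ![-(X 2 : MvPolynomial (Fin 3) ℂ), C I * X 1, X 0] P) =
      eval ((muGL : Matrix (Fin 3) (Fin 3) ℂ) *ᵥ v) P := by
  change aeval v _ = aeval _ P
  rw [aeval_bind₁, muGL_mulVec]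
  congr 2
  funext i
  fin_cases i <;> simp

lemma isHomogeneous_quarticQ (a₁ : ℝ) (a₂ a₃ : ℂ) : (quarticQ a₁ a₂ a₃).IsHomogeneous 4 := by
  have hlin : ∀ c : ℂ, (X 0 - C c * X 2 : MvPolynomial (Fin 3) ℂ).IsHomogeneous 1 ∧
      (X 0 + C c * X 2 : MvPolynomial (Fin 3) ℂ).IsHomogeneous 1 := fun c =>
    ⟨(isHomogeneous_X ℂ 0).sub (isHomogeneous_C_mul_X c 2),
      (isHomogeneous_X ℂ 0).add (isHomogeneous_C_mul_X c 2)⟩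
  exact ((isHomogeneous_X_pow 1 4).add
    ((isHomogeneous_X_pow 1 2).mul ((hlin _).1.mul (hlin _).2))).add
    ((((hlin _).1.mul (hlin _).2).mul (hlin _).1).mul (hlin _).2)

lemma map_conj_quarticQ (a₁ : ℝ) (a₂ a₃ : ℂ) :
    map (starRingEnd ℂ) (quarticQ a₁ a₂ a₃) =
      quarticQ a₁ (starRingEnd ℂ a₂) (starRingEnd ℂ a₃) := by
  simp [quarticQ, map_inv₀, conj_ofReal]

lemma eval_quarticQ (a₁ : ℝ) (a₂ a₃ : ℂ) (v : Fin 3 → ℂ) :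
    eval v (quarticQ a₁ a₂ a₃) =
      v 1 ^ 4 + v 1 ^ 2 * ((v 0 - a₁ * v 2) * (v 0 + (a₁ : ℂ)⁻¹ * v 2)) +
        ((v 0 - a₂ * v 2) * (v 0 + (starRingEnd ℂ a₂)⁻¹ * v 2)) *
          ((v 0 - a₃ * v 2) * (v 0 + (starRingEnd ℂ a₃)⁻¹ * v 2)) := by
  simp only [quarticQ, map_add, map_mul, map_sub, map_pow, eval_X, eval_C]
  ring

lemma factorPair_neg_swap {a b : ℂ} (ha : a ≠ 0) (hb : b ≠ 0) (x z : ℂ) :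
    (-z - b * x) * (-z + a⁻¹ * x) = -(b / a) * ((x - a * z) * (x + b⁻¹ * z)) := by
  field_simp
  ring

lemma eval_muGL_mulVec_quarticQ_conj {a₁ : ℝ} (ha₁ : a₁ ≠ 0) {a₂ a₃ : ℂ} (ha₂ : a₂ ≠ 0)
    (ha₃ : a₃ ≠ 0) (hreal : a₂ * a₃ ∈ Set.range ((↑) : ℝ → ℂ)) (v : Fin 3 → ℂ) :
    eval ((muGL : Matrix (Fin 3) (Fin 3) ℂ) *ᵥ v)
        (quarticQ a₁ (starRingEnd ℂ a₂) (starRingEnd ℂ a₃)) = eval v (quarticQ a₁ a₂ a₃) := by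
  have hconj : starRingEnd ℂ a₂ * starRingEnd ℂ a₃ = a₂ * a₃ := by
    obtain ⟨r, hr⟩ := hreal
    rw [← map_mul, ← hr, conj_ofReal]
  have hratio : starRingEnd ℂ a₂ / a₂ * (starRingEnd ℂ a₃ / a₃) = 1 := by
    rw [div_mul_div_comm, hconj, div_self (mul_ne_zero ha₂ ha₃)]
  have ha₁' : (a₁ : ℂ) ≠ 0 := ofReal_ne_zero.mpr ha₁
  rw [muGL_mulVec, eval_quarticQ, eval_quarticQ]
  simp only [Matrix.cons_val_zero, Matrix.cons_val_one, Matrix.cons_val_two, Matrix.head_cons,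
    Matrix.tail_cons, conj_conj]
  rw [factorPair_neg_swap ha₁' ha₁', factorPair_neg_swap ha₂ ((map_ne_zero _).mpr ha₂),
    factorPair_neg_swap ha₃ ((map_ne_zero _).mpr ha₃), div_self ha₁']
  simp only [mul_pow, I_sq, I_pow_four]
  linear_combination ((v 0 - a₂ * v 2) * (v 0 + (starRingEnd ℂ a₂)⁻¹ * v 2)) *
    ((v 0 - a₃ * v 2) * (v 0 + (starRingEnd ℂ a₃)⁻¹ * v 2)) * hratio

/-- for `a₁ ∈ ℝ ∖ {0}` and nonzero `a₂, a₃ ∈ ℂ` with `a₂a₃ ∈ ℝ`, the conjugate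
polynomial `Q̄` of `Q = Q_{a₁,a₂,a₃}` equals `Q_{a₁,ā₂,ā₃}`, one has the polynomial identity
`Q̄(−z, iy, x) = Q(x,y,z)`, and consequently the projective transformation
`μ(x:y:z) = (−z : iy : x)` maps the zero locus of `Q` bijectively onto that of `Q̄`. -/
theorem statement_11 (a₁ : ℝ) (ha₁ : a₁ ≠ 0) (a₂ a₃ : ℂ) (ha₂ : a₂ ≠ 0) (ha₃ : a₃ ≠ 0)
    (hreal : a₂ * a₃ ∈ Set.range ((↑) : ℝ → ℂ)) :
    MvPolynomial.map (starRingEnd ℂ) (quarticQ a₁ a₂ a₃) =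
      quarticQ a₁ ((starRingEnd ℂ) a₂) ((starRingEnd ℂ) a₃) ∧
    MvPolynomial.bind₁
        ![-(X 2 : MvPolynomial (Fin 3) ℂ), C Complex.I * X 1, X 0]
        (MvPolynomial.map (starRingEnd ℂ) (quarticQ a₁ a₂ a₃)) = quarticQ a₁ a₂ a₃ ∧
    MapsOnto muGL (zeroLocus (quarticQ a₁ a₂ a₃))
      (zeroLocus (MvPolynomial.map (starRingEnd ℂ) (quarticQ a₁ a₂ a₃))) := by
  have hconj := map_conj_quarticQ a₁ a₂ a₃
  have heval := eval_muGL_mulVec_quarticQ_conj ha₁ ha₂ ha₃ hreal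
  refine ⟨hconj, ?_, mapsOnto_of_forall_mem_iff fun p => ?_⟩
  · rw [hconj]
    exact MvPolynomial.funext fun v => by rw [eval_bind₁_eq_eval_muGL_mulVec, heval]
  · induction p using Projectivization.ind with
    | h v hv =>
      rw [hconj, projAction_mk, mk_mem_zeroLocus_iff (isHomogeneous_quarticQ ..),
        mk_mem_zeroLocus_iff (isHomogeneous_quarticQ ..), heval]

end
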